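/- Let u, v be permutations of [n] with inverses s = u⁻¹, t = v⁻¹. Then u is super-strongly Wilf equivalent to v if and only if Δᵢ(s) = Δᵢ(t) for every i ∈ [2, n−1], where Δᵢ(s) is the vector of consecutive differences of the sorted set of positions {s_i, s_{i+1}, …, s_n}. -/

import Mathlib

abbrev Word := List ℕ+

/-- Height (letter-sum) of a word. -/
def ht (w : Word) : ℕ := (w.map (fun x => (x : ℕ))).sum

/-- Embedding index set of `u` into `w` (1-based positions). -/
def Em (u w : Word) : Set ℕ :=
  {j | 1 ≤ j ∧ j - 1 + u.length ≤ w.length ∧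
    ∀ k, k < u.length → u.getD k 1 ≤ w.getD (j - 1 + k) 1}

/-- Super-strong Wilf equivalence. -/
def SSWilf (u v : Word) : Prop :=
  ∃ f : Word → Word, Function.Bijective f ∧
    (∀ w, (f w).length = w.length ∧ ht (f w) = ht w) ∧
    (∀ w, Em u w = Em v (f w))

/-- `w` is a permutation of `[n]`. -/
def IsPerm (n : ℕ) (w : Word) : Prop :=
  w.length = n ∧ ∀ k : ℕ, 1 ≤ k → k ≤ n → (w.map (fun x => (x : ℕ))).count k = 1

/-- 1-based position of the letter `k` in `u`. -/
def pos (u : Word) (k : ℕ) : ℕ := (u.map (fun x => (x : ℕ))).idxOf k + 1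

/-- `E` is an embedding set satisfying the overlap condition for words of length `n`. -/
def IsEmbSet (n : ℕ) (E : Finset ℕ) : Prop :=
  1 ∈ E ∧ (∀ a ∈ E, 1 ≤ a) ∧
  ∀ a ∈ E, (∀ b ∈ E, b ≤ a) ∨ ∃ b ∈ E, a < b ∧ b ≤ a + (n - 1)

/-- The letter at (1-based) position `p` of the (pre-)cluster of `u` on `E`. -/
def clusterAt (u : Word) (E : Finset ℕ) (p : ℕ) : ℕ+ :=
  (E.sup (fun a => if a ≤ p ∧ p < a + u.length then ((u.getD (p - a) 1 : ℕ+) : ℕ) else 1)).toPNat'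

/-- The minimal cluster of `u` with embedding set `E`. -/
def mcluster (u : Word) (E : Finset ℕ) : Word :=
  (List.range (E.sup id - 1 + u.length)).map (fun j => clusterAt u E (j + 1))

/-- The extended minimal cluster of `u` on `E` with prescribed length `n`. -/
def extCluster (u : Word) (E : Finset ℕ) (n : ℕ) : Word :=
  (List.range n).map (fun j => clusterAt u E (j + 1))

/-- The multiset `i⁺(u)` of distances from the letter `i` to larger letters. -/
def iplus (n : ℕ) (u : Word) (i : ℕ) : Multiset ℕ :=
  (Multiset.Icc (i + 1) n).map (fun j => Nat.dist (pos u i) (pos u j))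

/-- Cross equivalence of permutations of `[n]`. -/
def CrossEq (n : ℕ) (u v : Word) : Prop :=
  ∀ i, 1 ≤ i → i ≤ n - 1 → iplus n u i = iplus n v i

/-- Increasing list of (1-based) positions in `u` of the letters `≥ i`. -/
def posList (u : Word) (i : ℕ) : List ℕ :=
  ((List.range u.length).filter (fun k => i ≤ ((u.getD k 1 : ℕ+) : ℕ))).map (· + 1)

/-- `Δᵢ(u⁻¹)`: consecutive differences of positions of letters `≥ i` in `u`. -/
def Delta (u : Word) (i : ℕ) : List ℕ :=
  List.zipWith (fun a b => b - a) (posList u i) (posList u i).tail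

/-- Shift `(p-1) + E` of an embedding set. -/
def shiftSet (p : ℕ) (E : Finset ℕ) : Finset ℕ := E.image (fun e => p - 1 + e)

/-!
A word `w` contains `u` at every position of a set `E` iff it lies letterwise above the cluster
`extCluster u E`, whose height is `|w| + ∑ᵢ #(Pᵢ + E)` with `Pᵢ` the set of positions of the
letters `≥ i` of `u`. A super-strong Wilf equivalence preserves the minimal height of words
containing `u` at `E`, so `∑ᵢ #(Pᵢ + E)` agrees for `u` and `v`. Möbius inversion over subsets turns
these sumset sizes into the numbers of translates of a set `Z` lying inside the `Pᵢ`; taking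
`Z = Pᵢ(u)` for increasing `i` shows that each `Pᵢ(v)` is a translate of `Pᵢ(u)`, which is
`Δᵢ(u⁻¹) = Δᵢ(v⁻¹)`.

Conversely, translates give clusters of equal heights. Words of given length and height lying above
two clusters of equal length and height are equinumerous (move the excess from one floor to the
other), so by Möbius inversion the words of given length and height with a given embedding set are
equinumerous for `u` and `v`, and matching these fibres gives the bijection.
-/

open Finset
open scoped Pointwise

namespace Finset

variable {ι α : Type*} [DecidableEq ι]

theorem eq_of_sum_powerset_eq {M : Type*} [AddCancelCommMonoid M] {f g : Finset ι → M}
    (h : ∀ C : Finset ι, ∑ D ∈ C.powerset, f D = ∑ D ∈ C.powerset, g D) (C : Finset ι) :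
    f C = g C := by
  induction C using Finset.strongInduction with
  | H C ih =>
    have hC := h C
    rw [← add_sum_erase _ _ (mem_powerset_self C), ← add_sum_erase _ _ (mem_powerset_self C),
      sum_congr rfl fun D hD => ih D ((ssubset_iff_subset_ne.2 ⟨mem_powerset.1
        (mem_of_mem_erase hD), ne_of_mem_erase hD⟩))] at hC
    exact add_right_cancel hC

theorem sum_powerset_card_filter_eq (s : Finset α) (φ : α → Finset ι) (C : Finset ι) :
    ∑ D ∈ C.powerset, #{x ∈ s | φ x = D} = #{x ∈ s | φ x ⊆ C} := by
  rw [card_eq_sum_card_fiberwise (f := φ) (t := C.powerset) fun x hx => by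
    simpa using (mem_filter.1 hx).2]
  refine sum_congr rfl fun D hD => ?_
  rw [filter_filter]
  exact congrArg card (filter_congr fun x _ => by
    constructor
    · rintro rfl; exact ⟨mem_powerset.1 hD, rfl⟩
    · exact And.right)

end Finset

section Translates

variable {G : Type*} [AddCommGroup G] [DecidableEq G]

-- Restricting to `X - Z` only makes the set finite: it loses no `c` when `Z` is nonempty.
def translatesInto (Z X : Finset G) : Finset G := {c ∈ X - Z | c +ᵥ Z ⊆ X}

theorem vadd_finset_subset_iff_forall {Z X : Finset G} {c : G} :
    c +ᵥ Z ⊆ X ↔ ∀ z ∈ Z, c + z ∈ X := by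
  simp [Finset.subset_iff, Finset.mem_vadd_finset]

theorem translatesInto_vadd (Z X : Finset G) (c : G) :
    translatesInto Z (c +ᵥ X) = c +ᵥ translatesInto Z X := by
  rw [translatesInto, vadd_sub_assoc, vadd_finset_def (s := X - Z), filter_image,
    ← vadd_finset_def]
  exact congrArg _ (filter_congr fun a _ => by
    rw [vadd_eq_add, add_vadd, vadd_finset_subset_vadd_finset_iff])

/-- Möbius inversion over the subsets of `Z`, applied to the points `c` of `X k - Z` classified by
the set of `z ∈ Z` with `c + z ∈ X k`. -/
theorem sum_card_translatesInto_eq {κ : Type*} (I : Finset κ) (X Y : κ → Finset G)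
    (h : ∀ B : Finset G, ∑ k ∈ I, #(X k - B) = ∑ k ∈ I, #(Y k - B)) (Z : Finset G) :
    ∑ k ∈ I, #(translatesInto Z (X k)) = ∑ k ∈ I, #(translatesInto Z (Y k)) := by
  let hits (X : Finset G) (c : G) : Finset G := {z ∈ Z | c + z ∈ X}
  have h_transl (X : Finset G) : translatesInto Z X = {c ∈ X - Z | hits X c = Z} :=
    filter_congr fun c _ => by rw [vadd_finset_subset_iff_forall, filter_eq_self]
  have h_subset (X C : Finset G) :
      #{c ∈ X - Z | hits X c ⊆ C} + #(X - (Z \ C)) = #(X - Z) := by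
    have : {c ∈ X - Z | hits X c ⊆ C} = (X - Z) \ (X - (Z \ C)) := by
      ext c
      simp only [hits, mem_filter, mem_sdiff, mem_sub, Finset.subset_iff, and_imp, not_exists,
        not_and]
      refine and_congr_right fun _ => ⟨fun h x hx z hz hzC hxz => hzC (h hz ?_),
        fun h z hz hzX => by_contra fun hzC => h _ hzX z hz hzC (add_sub_cancel_right c z)⟩
      rwa [← hxz, sub_add_cancel]
    rw [this, card_sdiff_add_card_eq_card (sub_subset_sub subset_rfl sdiff_subset)]
  simp only [h_transl]
  refine Finset.eq_of_sum_powerset_eq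
    (f := fun D => ∑ k ∈ I, #{c ∈ X k - Z | hits (X k) c = D})
    (g := fun D => ∑ k ∈ I, #{c ∈ Y k - Z | hits (Y k) c = D}) (fun C => ?_) Z
  rw [sum_comm, sum_comm (s := C.powerset)]
  simp only [sum_powerset_card_filter_eq]
  have hX : ∑ k ∈ I, #{c ∈ X k - Z | hits (X k) c ⊆ C} + ∑ k ∈ I, #(X k - (Z \ C)) =
      ∑ k ∈ I, #(X k - Z) := sum_add_distrib.symm.trans (sum_congr rfl fun k _ => h_subset _ C)
  have hY : ∑ k ∈ I, #{c ∈ Y k - Z | hits (Y k) c ⊆ C} + ∑ k ∈ I, #(Y k - (Z \ C)) =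
      ∑ k ∈ I, #(Y k - Z) := sum_add_distrib.symm.trans (sum_congr rfl fun k _ => h_subset _ C)
  rw [h, h Z] at hX
  omega

theorem mem_translatesInto {Z X : Finset G} (hZ : Z.Nonempty) {c : G} :
    c ∈ translatesInto Z X ↔ c +ᵥ Z ⊆ X := by
  refine ⟨fun hc => (mem_filter.1 hc).2, fun hc => mem_filter.2 ⟨?_, hc⟩⟩
  obtain ⟨z, hz⟩ := hZ
  exact mem_sub.2 ⟨c + z, hc (vadd_mem_vadd_finset hz), z, hz, add_sub_cancel_right c z⟩

theorem translatesInto_eq_empty_of_card_lt {Z X : Finset G} (h : #X < #Z) :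
    translatesInto Z X = ∅ :=
  filter_false_of_mem fun c _ hc => (card_le_card hc).not_gt (by rwa [card_vadd_finset])

/-- By induction on `i`: in the sum over `j`, the terms with `j < i` agree by induction and those
with `j > i` vanish, so `X i` has as many translates inside `Y i` as inside `X i`, at least one. -/
theorem exists_vadd_eq_of_sum_card_translatesInto_eq (s : Finset ℕ) (X Y : ℕ → Finset G)
    (hcard : ∀ i ∈ s, #(Y i) = #(X i)) (hlt : ∀ i ∈ s, ∀ j ∈ s, i < j → #(X j) < #(X i))
    (h : ∀ i ∈ s, ∑ j ∈ s, #(translatesInto (X i) (X j)) =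
      ∑ j ∈ s, #(translatesInto (X i) (Y j))) (i : ℕ) (hi : i ∈ s) :
    ∃ c : G, Y i = c +ᵥ X i := by
  induction i using Nat.strong_induction_on with
  | _ i ih =>
    have h_other : ∀ j ∈ s.erase i,
        #(translatesInto (X i) (X j)) = #(translatesInto (X i) (Y j)) := by
      intro j hj
      obtain ⟨hji, hj⟩ := mem_erase.1 hj
      rcases hji.lt_or_gt with hji | hij
      · obtain ⟨c, hc⟩ := ih j hji hj
        rw [hc, translatesInto_vadd, card_vadd_finset]
      · have := hlt i hi j hj hij
        rw [translatesInto_eq_empty_of_card_lt this,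
          translatesInto_eq_empty_of_card_lt (hcard j hj ▸ this)]
    have h_self : #(translatesInto (X i) (X i)) = #(translatesInto (X i) (Y i)) := by
      have := h i hi
      rw [← add_sum_erase _ _ hi, ← add_sum_erase _ _ hi, sum_congr rfl h_other] at this
      exact add_right_cancel this
    rcases (X i).eq_empty_or_nonempty with hX | hX
    · exact ⟨0, by rw [hX, vadd_finset_empty, ← card_eq_zero, hcard i hi, hX, card_empty]⟩
    have h0 : (0 : G) ∈ translatesInto (X i) (X i) := by
      rw [mem_translatesInto hX, zero_vadd]
    obtain ⟨c, hc⟩ := card_pos.1 (h_self ▸ card_pos.2 ⟨0, h0⟩)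
    exact ⟨c, (eq_of_subset_of_card_le ((mem_translatesInto hX).1 hc)
      (by rw [card_vadd_finset, hcard i hi])).symm⟩

theorem exists_vadd_eq_of_card_le_one {X Y : Finset G} (h : #Y = #X) (h1 : #X ≤ 1) :
    ∃ c : G, Y = c +ᵥ X := by
  rcases Nat.le_one_iff_eq_zero_or_eq_one.1 h1 with h0 | h1
  · exact ⟨0, by rw [card_eq_zero.1 h0, card_eq_zero.1 (h.trans h0), vadd_finset_empty]⟩
  · obtain ⟨x, rfl⟩ := card_eq_one.1 h1
    obtain ⟨y, rfl⟩ := card_eq_one.1 (h.trans h1)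
    exact ⟨y - x, by simp⟩

theorem sum_card_sub_eq_of_sum_card_add_eq {κ : Type*} (I : Finset κ) (X Y : κ → Finset ℤ)
    (h : ∀ E : Finset ℕ, (∀ a ∈ E, 1 ≤ a) →
      ∑ k ∈ I, #(X k + E.image (↑)) = ∑ k ∈ I, #(Y k + E.image (↑)))
    (B : Finset ℤ) : ∑ k ∈ I, #(X k - B) = ∑ k ∈ I, #(Y k - B) := by
  -- `K +ᵥ -B` consists of positive integers, and `#(X - B) = #(X + (K +ᵥ -B))`.
  set K : ℤ := B.sup Int.natAbs + 1
  have hK : ∀ z ∈ -B, 1 ≤ K + z := fun z hz => by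
    obtain ⟨y, hy, rfl⟩ := mem_neg.1 hz
    have := le_sup (f := Int.natAbs) hy
    omega
  set E : Finset ℕ := (-B).image fun z => (K + z).toNat
  have hE : E.image (↑) = K +ᵥ -B := by
    ext z
    simp only [E, mem_image, mem_vadd_finset, vadd_eq_add]
    constructor
    · rintro ⟨_, ⟨y, hy, rfl⟩, rfl⟩
      exact ⟨y, hy, by have := hK y hy; omega⟩
    · rintro ⟨y, hy, rfl⟩
      exact ⟨_, ⟨y, hy, rfl⟩, by have := hK y hy; omega⟩
  have hcard (Z : Finset ℤ) : #(Z - B) = #(Z + E.image (↑)) := by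
    rw [hE, add_vadd_comm, card_vadd_finset, sub_eq_add_neg]
  simp only [hcard]
  refine h E fun a ha => ?_
  obtain ⟨z, hz, rfl⟩ := mem_image.1 ha
  have := hK z hz
  omega

end Translates

theorem exists_equiv_of_card_fiber_eq {α κ : Type*} {p q : α → κ} (F G : κ → Finset α)
    (hF : ∀ x c, p x = c ↔ x ∈ F c) (hG : ∀ x c, q x = c ↔ x ∈ G c)
    (h : ∀ c, #(F c) = #(G c)) : ∃ e : α ≃ α, ∀ x, q (e x) = p x :=
  ⟨Equiv.ofFiberEquiv fun c => (Equiv.subtypeEquivRight (hF · c)).trans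
      ((Finset.equivOfCardEq (h c)).trans (Equiv.subtypeEquivRight (hG · c)).symm),
    Equiv.ofFiberEquiv_map _⟩

theorem SSWilf.symm {u v : Word} (h : SSWilf u v) : SSWilf v u := by
  obtain ⟨f, hf, hlen, hEm⟩ := h
  let e := Equiv.ofBijective f hf
  refine ⟨e.symm, e.symm.bijective, fun w => ?_, fun w => ?_⟩
  · rw [← (hlen (e.symm w)).1, ← (hlen (e.symm w)).2]
    exact ⟨congrArg List.length (e.apply_symm_apply w),
      congrArg ht (e.apply_symm_apply w)⟩
  · conv_lhs => rw [← e.apply_symm_apply w]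
    exact (hEm (e.symm w)).symm

-- In `IsPerm` and `ht`, `w.map (fun x => (x : ℕ))` elaborates through the monad lift of `List`.
theorem map_coe_eq (u : Word) : u.map (fun x => (x : ℕ)) = u.map ((↑) : ℕ+ → ℕ) := by
  induction u <;> simp_all

@[simp] theorem ht_nil : ht [] = 0 := rfl

@[simp] theorem ht_cons (a : ℕ+) (w : Word) : ht (a :: w) = a + ht w := by
  simp [ht]

theorem ht_le_ht_of_forall₂ {c w : Word} (h : List.Forall₂ (· ≤ ·) c w) : ht c ≤ ht w := by
  induction h with
  | nil => rfl
  | cons hab _ ih => simp only [ht_cons]; exact add_le_add (PNat.coe_le_coe _ _ |>.2 hab) ih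

def wordsOf : ℕ → ℕ → Finset Word
  | 0, h => if h = 0 then {[]} else ∅
  | m + 1, h => (Icc 1 h).biUnion fun x => (wordsOf m (h - x)).image (x.toPNat' :: ·)

theorem mem_wordsOf {m h : ℕ} {w : Word} : w ∈ wordsOf m h ↔ w.length = m ∧ ht w = h := by
  induction m generalizing h w with
  | zero =>
    rw [wordsOf]
    split_ifs with h0 <;> cases w <;> simp [h0, eq_comm]
  | succ m ih =>
    cases w with
    | nil => simp [wordsOf]
    | cons a w =>
      simp only [wordsOf, mem_biUnion, mem_Icc, mem_image, ih, List.cons.injEq,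
        List.length_cons, ht_cons]
      constructor
      · rintro ⟨x, ⟨hx, hxh⟩, w', ⟨hlen, hht⟩, rfl, rfl⟩
        simp only [Nat.toPNat'_coe, if_pos (show 0 < x by omega)]
        omega
      · rintro ⟨hlen, rfl⟩
        exact ⟨a, ⟨a.pos, by omega⟩, w, ⟨by omega, by omega⟩, PNat.coe_toPNat' a, rfl⟩

theorem PNat.coe_add_sub_of_le {a b : ℕ+} (c : ℕ+) (h : a ≤ b) :
    ((c + b - a : ℕ+) : ℕ) = c + b - a := by
  have : (a : ℕ) < c + b := by have := c.pos; have : (a : ℕ) ≤ b := h; omega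
  rw [PNat.sub_coe, if_pos (by rwa [← PNat.coe_lt_coe, PNat.add_coe]), PNat.add_coe]

-- Moves the excess of `w` over the floor `c` onto the floor `c'`.
def rebase : Word → Word → Word → Word
  | a :: c, a' :: c', b :: w => (a' + b - a) :: rebase c c' w
  | _, _, _ => []

section Rebase

variable {c c' w : Word}

theorem forall₂_rebase (h : List.Forall₂ (· ≤ ·) c w) (hlen : c.length = c'.length) :
    List.Forall₂ (· ≤ ·) c' (rebase c c' w) := by
  induction h generalizing c' with
  | nil => cases c' <;> simp_all [rebase]
  | @cons a b c w hab _ ih =>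
    obtain _ | ⟨a', c'⟩ := c'
    · simp at hlen
    · refine .cons ?_ (ih (by simpa using hlen))
      have hab' : (a : ℕ) ≤ b := hab
      rw [← PNat.coe_le_coe, PNat.coe_add_sub_of_le a' hab]
      omega

theorem ht_rebase (h : List.Forall₂ (· ≤ ·) c w) (hlen : c.length = c'.length) :
    ht (rebase c c' w) + ht c = ht w + ht c' := by
  induction h generalizing c' with
  | nil => cases c' <;> simp_all [rebase]
  | @cons a b c w hab _ ih =>
    obtain _ | ⟨a', c'⟩ := c'
    · simp at hlen
    · have := ih (c' := c') (by simpa using hlen)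
      have hab' : (a : ℕ) ≤ b := hab
      simp only [rebase, ht_cons, PNat.coe_add_sub_of_le a' hab]
      omega

theorem rebase_rebase (h : List.Forall₂ (· ≤ ·) c w) (hlen : c.length = c'.length) :
    rebase c' c (rebase c c' w) = w := by
  induction h generalizing c' with
  | nil => cases c' <;> simp_all [rebase]
  | @cons a b c w hab _ ih =>
    obtain _ | ⟨a', c'⟩ := c'
    · simp at hlen
    · have hab' : (a : ℕ) ≤ b := hab
      have ha' : a' ≤ a' + b - a := by
        rw [← PNat.coe_le_coe, PNat.coe_add_sub_of_le a' hab]; omega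
      simp only [rebase, ih (by simpa using hlen), List.cons.injEq, and_true]
      rw [← PNat.coe_inj, PNat.coe_add_sub_of_le a ha', PNat.coe_add_sub_of_le a' hab]
      omega

theorem card_filter_forall₂_eq (hlen : c.length = c'.length) (hht : ht c = ht c') (m h : ℕ) :
    #{w ∈ wordsOf m h | List.Forall₂ (· ≤ ·) c w} =
      #{w ∈ wordsOf m h | List.Forall₂ (· ≤ ·) c' w} := by
  have maps_to {c c' : Word} (hlen : c.length = c'.length) (hht : ht c = ht c') {w : Word}
      (hw : w ∈ {w ∈ wordsOf m h | List.Forall₂ (· ≤ ·) c w}) :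
      rebase c c' w ∈ {w ∈ wordsOf m h | List.Forall₂ (· ≤ ·) c' w} := by
    simp only [mem_filter, mem_wordsOf] at hw ⊢
    obtain ⟨⟨rfl, rfl⟩, hcw⟩ := hw
    have hc' := forall₂_rebase hcw hlen
    refine ⟨⟨?_, ?_⟩, hc'⟩
    · rw [← hc'.length_eq, ← hlen, hcw.length_eq]
    · have := ht_rebase hcw hlen
      omega
  refine card_nbij' (rebase c c') (rebase c' c) (fun w hw => maps_to hlen hht hw)
    (fun w hw => maps_to hlen.symm hht.symm hw) (fun w hw => ?_) (fun w hw => ?_)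
  · exact rebase_rebase (mem_filter.1 hw).2 hlen
  · exact rebase_rebase (mem_filter.1 hw).2 hlen.symm

end Rebase

section Clusters

variable {u w : Word} {E : Finset ℕ}

theorem mem_posList {i q : ℕ} :
    q ∈ posList u i ↔ 1 ≤ q ∧ q ≤ u.length ∧ i ≤ u.getD (q - 1) 1 := by
  simp only [posList, List.mem_map, List.mem_filter, List.mem_range, decide_eq_true_eq]
  constructor
  · rintro ⟨k, ⟨hk, hi⟩, rfl⟩
    exact ⟨by omega, hk, by simpa using hi⟩
  · rintro ⟨h1, hq, hi⟩
    exact ⟨q - 1, ⟨by omega, hi⟩, by omega⟩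

theorem clusterAt_le_iff {p : ℕ} {x : ℕ+} :
    clusterAt u E p ≤ x ↔ ∀ a ∈ E, a ≤ p → p < a + u.length → u.getD (p - a) 1 ≤ x := by
  have hx : 1 ≤ (x : ℕ) := x.pos
  have toPNat'_le (n : ℕ) : n.toPNat' ≤ x ↔ n ≤ x := by
    rw [← PNat.coe_le_coe, Nat.toPNat'_coe]
    split_ifs <;> omega
  rw [clusterAt, toPNat'_le, Finset.sup_le_iff]
  refine forall₂_congr fun a _ => ?_
  split_ifs with h
  · simp [h, PNat.coe_le_coe]
  · simp only [hx, true_iff]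
    omega

theorem le_clusterAt_iff {i p : ℕ} (hi : 2 ≤ i) :
    i ≤ (clusterAt u E p : ℕ) ↔ ∃ a ∈ E, ∃ q ∈ posList u i, a + q = p + 1 := by
  have hx : ((i - 1).toPNat' : ℕ) = i - 1 := by rw [Nat.toPNat'_coe, if_pos (by omega)]
  have hle (y : ℕ+) : i ≤ (y : ℕ) ↔ ¬ y ≤ (i - 1).toPNat' := by
    rw [← PNat.coe_le_coe, hx]; omega
  rw [hle, clusterAt_le_iff]
  simp only [not_forall, exists_prop, ← hle, mem_posList]
  constructor
  · rintro ⟨a, ha, hap, hpa, hi⟩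
    exact ⟨a, ha, p - a + 1, ⟨by omega, by omega, by simpa using hi⟩, by omega⟩
  · rintro ⟨a, ha, q, ⟨hq, hqu, hi⟩, hp⟩
    exact ⟨a, ha, by omega, by omega, by rwa [show p - a = q - 1 by omega]⟩

def emFinset (u w : Word) : Finset ℕ :=
  {j ∈ Icc 1 (w.length + 1 - u.length) | ∀ k < u.length, u.getD k 1 ≤ w.getD (j - 1 + k) 1}

theorem coe_emFinset (u w : Word) : (emFinset u w : Set ℕ) = Em u w := by
  ext j
  simp only [emFinset, coe_filter, mem_Icc, Em, Set.mem_ofPred_eq]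
  constructor
  · rintro ⟨⟨h1, h2⟩, h⟩
    exact ⟨h1, by omega, h⟩
  · rintro ⟨h1, h2, h⟩
    exact ⟨⟨h1, by omega⟩, h⟩

theorem emFinset_subset (u w : Word) : emFinset u w ⊆ Icc 1 (w.length + 1 - u.length) :=
  filter_subset _ _

theorem forall₂_extCluster_iff (hE : E ⊆ Icc 1 (w.length + 1 - u.length)) :
    List.Forall₂ (· ≤ ·) (extCluster u E w.length) w ↔ E ⊆ emFinset u w := by
  have hdom : List.Forall₂ (· ≤ ·) (extCluster u E w.length) w ↔
      ∀ p < w.length, clusterAt u E (p + 1) ≤ w.getD p 1 := by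
    simp +contextual [List.forall₂_iff_get, extCluster]
  simp only [hdom, clusterAt_le_iff, Finset.subset_iff, emFinset, mem_filter]
  constructor
  · intro h a ha
    have := mem_Icc.1 (hE ha)
    refine ⟨hE ha, fun k hk => ?_⟩
    have := h (a - 1 + k) (by omega) a ha (by omega) (by omega)
    rwa [show a - 1 + k + 1 - a = k by omega] at this
  · intro h p hp a ha hap hpa
    have := mem_Icc.1 (hE ha)
    have := (h ha).2 (p + 1 - a) (by omega)
    rwa [show a - 1 + (p + 1 - a) = p by omega] at this

end Clusters

section Heights

variable {u : Word} {E : Finset ℕ}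

-- Integer-valued so that it can be translated in both directions.
def posSet (u : Word) (i : ℕ) : Finset ℤ := ((posList u i).map ((↑) : ℕ → ℤ)).toFinset

theorem mem_posSet {i : ℕ} {z : ℤ} : z ∈ posSet u i ↔ ∃ q ∈ posList u i, (q : ℤ) = z := by
  simp [posSet]

theorem ht_eq_sum (w : Word) : ht w = (w.map ((↑) : ℕ+ → ℕ)).sum := by
  rw [ht, map_coe_eq]

theorem ht_extCluster_eq_sum (m : ℕ) :
    ht (extCluster u E m) = ∑ p ∈ range m, (clusterAt u E (p + 1) : ℕ) := by
  rw [ht_eq_sum, extCluster, List.map_map, Finset.sum_eq_multiset_sum]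
  rfl

theorem card_filter_le_clusterAt {m i : ℕ} (hi : 2 ≤ i) (hE : E ⊆ Icc 1 (m + 1 - u.length)) :
    #{p ∈ range m | i ≤ (clusterAt u E (p + 1) : ℕ)} = #(posSet u i + E.image (↑)) := by
  have h_inj : (fun p : ℕ => (p : ℤ) + 2).Injective := fun p q h => by simpa using h
  rw [← card_image_of_injective _ h_inj]
  congr 1
  ext z
  simp only [mem_image, mem_filter, mem_range, le_clusterAt_iff hi, mem_add, mem_posSet]
  constructor
  · rintro ⟨p, ⟨hp, a, ha, q, hq, hpq⟩, rfl⟩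
    exact ⟨q, ⟨q, hq, rfl⟩, a, ⟨a, ha, rfl⟩, by omega⟩
  · rintro ⟨_, ⟨q, hq, rfl⟩, _, ⟨a, ha, rfl⟩, rfl⟩
    have := mem_Icc.1 (hE ha)
    have := mem_posList.1 hq
    exact ⟨a + q - 2, ⟨by omega, a, ha, q, hq, by omega⟩, by omega⟩

/-- A letter `x ≤ N` is `1 + #{i ∈ [2, N] | i ≤ x}`, and the cluster has a letter `≥ i` exactly at
the positions of `posSet u i + E` (shifted by one). -/
theorem ht_extCluster {N m : ℕ} (hN : 1 ≤ N) (hu : ∀ x ∈ u, (x : ℕ) ≤ N)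
    (hE : E ⊆ Icc 1 (m + 1 - u.length)) :
    ht (extCluster u E m) = m + ∑ i ∈ Icc 2 N, #(posSet u i + E.image (↑)) := by
  have hcl (p : ℕ) :
      (clusterAt u E p : ℕ) = 1 + #{i ∈ Icc 2 N | i ≤ (clusterAt u E p : ℕ)} := by
    have : clusterAt u E p ≤ N.toPNat' := clusterAt_le_iff.2 fun a _ _ hpa => by
      rw [← PNat.coe_le_coe, Nat.toPNat'_coe, if_pos (show 0 < N by omega)]
      exact hu _ (List.getD_eq_getElem u 1 (n := p - a) (by omega) ▸ List.getElem_mem _)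
    rw [← PNat.coe_le_coe, Nat.toPNat'_coe, if_pos (show 0 < N by omega)] at this
    have hpos := (clusterAt u E p).pos
    rw [show {i ∈ Icc 2 N | i ≤ (clusterAt u E p : ℕ)} = Icc 2 (clusterAt u E p : ℕ) by
      ext; simp only [mem_filter, mem_Icc]; omega, Nat.card_Icc]
    omega
  rw [ht_extCluster_eq_sum, sum_congr rfl fun p _ => hcl (p + 1), sum_add_distrib,
    sum_const, card_range, smul_eq_mul, mul_one]
  congr 1
  have := sum_card_bipartiteAbove_eq_sum_card_bipartiteBelow (s := range m) (t := Icc 2 N)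
    (r := fun p i => i ≤ (clusterAt u E (p + 1) : ℕ))
  simp only [bipartiteAbove, bipartiteBelow] at this
  rw [this]
  exact sum_congr rfl fun i hi => card_filter_le_clusterAt (mem_Icc.1 hi).1 hE

end Heights

section Permutations

variable {n : ℕ} {u : Word}

theorem IsPerm.perm (hu : IsPerm n u) : (u.map ((↑) : ℕ+ → ℕ)).Perm (List.range' 1 n) := by
  obtain ⟨hlen, hcount⟩ := hu
  rw [map_coe_eq] at hcount
  refine (List.Subperm.perm_of_length_le ?_ (by simp [hlen])).symm
  refine List.subperm_ext_iff.2 fun x hx => ?_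
  rw [List.count_eq_one_of_mem List.nodup_range' hx]
  obtain ⟨h1, h2⟩ := List.mem_range'_1.1 hx
  exact (hcount x h1 (by omega)).ge

theorem IsPerm.le_of_mem (hu : IsPerm n u) {x : ℕ+} (hx : x ∈ u) : (x : ℕ) ≤ n := by
  have := List.mem_range'_1.1 (hu.perm.subset (List.mem_map_of_mem hx))
  omega

theorem posList_pairwise_lt (u : Word) (i : ℕ) : (posList u i).Pairwise (· < ·) :=
  List.pairwise_map.2 ((List.pairwise_lt_range.filter _).imp fun h => by omega)

theorem length_posList (u : Word) (i : ℕ) :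
    (posList u i).length = (u.map ((↑) : ℕ+ → ℕ)).countP (i ≤ ·) := by
  have hu : (List.range u.length).map (u.getD · 1) = u := by
    apply List.ext_getElem <;> simp +contextual
  conv_rhs => rw [← hu]
  rw [posList, List.length_map, ← List.countP_eq_length_filter, List.map_map, List.countP_map]
  rfl

theorem countP_range' (n i : ℕ) (hi : 1 ≤ i) : (List.range' 1 n).countP (i ≤ ·) = n + 1 - i := by
  induction n with
  | zero => simp; omega
  | succ n ih =>
    rw [List.range'_concat, List.countP_append, ih]
    simp only [List.countP_singleton, decide_eq_true_eq]
    split_ifs <;> omega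

theorem card_posSet (hu : IsPerm n u) {i : ℕ} (hi : 1 ≤ i) : #(posSet u i) = n + 1 - i := by
  have h_nodup := (posList_pairwise_lt u i).nodup.map Nat.cast_injective (β := ℤ)
  rw [posSet, List.toFinset_card_of_nodup h_nodup, List.length_map, length_posList,
    hu.perm.countP_eq, countP_range' n i hi]

end Permutations

section Delta

theorem zipWith_tail_sub_eq_iff : ∀ {L M : List ℕ}, L.Pairwise (· < ·) → M.Pairwise (· < ·) →
    L.length = M.length →
    (List.zipWith (fun a b => b - a) L L.tail = List.zipWith (fun a b => b - a) M M.tail ↔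
      ∃ c : ℤ, M.map ((↑) : ℕ → ℤ) = (L.map (↑)).map (c + ·))
  | [], [], _, _, _ => by simp
  | [a], [b], _, _, _ => ⟨fun _ => ⟨b - a, by simp⟩, fun _ => rfl⟩
  | a :: a' :: L, b :: b' :: M, hL, hM, hlen => by
    have haa' : a < a' := List.rel_of_pairwise_cons hL List.mem_cons_self
    have hbb' : b < b' := List.rel_of_pairwise_cons hM List.mem_cons_self
    have ih := zipWith_tail_sub_eq_iff hL.of_cons hM.of_cons (by simpa using hlen)
    simp only [List.tail_cons, List.zipWith_cons_cons, List.cons.injEq, List.map_cons] at ih ⊢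
    rw [ih]
    constructor
    · rintro ⟨h, c, hb', hM'⟩
      exact ⟨c, by omega, hb', hM'⟩
    · rintro ⟨c, hb, hb', hM'⟩
      exact ⟨by omega, c, hb', hM'⟩
  | [], _ :: _, _, _, h | _ :: _, [], _, _, h | [_], _ :: _ :: _, _, _, h
  | _ :: _ :: _, [_], _, _, h => by simp at h

theorem eq_map_add_iff_toFinset_eq {L M : List ℤ} (hL : L.Pairwise (· < ·))
    (hM : M.Pairwise (· < ·)) (c : ℤ) : M = L.map (c + ·) ↔ M.toFinset = c +ᵥ L.toFinset := by
  have h_toFinset : (L.map (c + ·)).toFinset = c +ᵥ L.toFinset := by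
    ext; simp [mem_vadd_finset]
  refine ⟨fun h => h ▸ h_toFinset, fun h => ?_⟩
  have hL' : (L.map (c + ·)).Pairwise (· < ·) := List.pairwise_map.2 (hL.imp (by omega))
  refine List.Perm.eq_of_pairwise (fun a b _ _ hab hba => absurd (hab.trans hba) (lt_irrefl a))
    hM hL' (List.perm_of_nodup_nodup_toFinset_eq hM.nodup hL'.nodup (h.trans h_toFinset.symm))

variable {u v : Word} {i : ℕ}

theorem delta_eq_iff_exists_vadd (hlen : (posList u i).length = (posList v i).length) :
    Delta u i = Delta v i ↔ ∃ c : ℤ, posSet v i = c +ᵥ posSet u i := by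
  have hsorted (w : Word) : ((posList w i).map ((↑) : ℕ → ℤ)).Pairwise (· < ·) :=
    List.pairwise_map.2 ((posList_pairwise_lt w i).imp (by omega))
  rw [Delta, Delta, zipWith_tail_sub_eq_iff (posList_pairwise_lt u i) (posList_pairwise_lt v i)
    hlen]
  exact exists_congr fun c => eq_map_add_iff_toFinset_eq (hsorted u) (hsorted v) c

end Delta

section Equivalence

variable {n : ℕ} {u v : Word}

theorem ht_extCluster_le_of_sswilf (h : SSWilf u v) (hlen : u.length = v.length) {m : ℕ}
    {E : Finset ℕ} (hE : E ⊆ Icc 1 (m + 1 - u.length)) :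
    ht (extCluster v E m) ≤ ht (extCluster u E m) := by
  obtain ⟨f, -, hf, hEm⟩ := h
  set c := extCluster u E m
  have hc : c.length = m := by simp [c, extCluster]
  have hfc : (f c).length = m := (hf c).1.trans hc
  have hEu : E ⊆ emFinset u c := by
    refine (forall₂_extCluster_iff (hc ▸ hE)).1 ?_
    rw [hc]
    exact List.forall₂_same.2 fun _ _ => le_rfl
  have hEv : E ⊆ emFinset v (f c) := by
    rwa [← coe_subset, coe_emFinset, ← hEm, ← coe_emFinset, coe_subset]
  have hdom := (forall₂_extCluster_iff (by rwa [hfc, ← hlen])).2 hEv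
  rw [hfc] at hdom
  exact (ht_le_ht_of_forall₂ hdom).trans (hf c).2.le

theorem sum_card_add_eq_of_sswilf (hu : IsPerm n u) (hv : IsPerm n v) (h : SSWilf u v)
    (E : Finset ℕ) (hE : ∀ a ∈ E, 1 ≤ a) :
    ∑ i ∈ Icc 2 (n + 1), #(posSet u i + E.image (↑)) =
      ∑ i ∈ Icc 2 (n + 1), #(posSet v i + E.image (↑)) := by
  set m := E.sup id + n
  have hEm : E ⊆ Icc 1 (m + 1 - n) := fun a ha => by
    have := le_sup (f := id) ha
    exact mem_Icc.2 ⟨hE a ha, by simp only [id] at this; omega⟩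
  have hlen : u.length = v.length := hu.1.trans hv.1.symm
  have hu' := ht_extCluster (N := n + 1) (E := E) (m := m) (by omega)
    (fun x hx => (hu.le_of_mem hx).trans n.le_succ) (hu.1 ▸ hEm)
  have hv' := ht_extCluster (N := n + 1) (E := E) (m := m) (by omega)
    (fun x hx => (hv.le_of_mem hx).trans n.le_succ) (hv.1 ▸ hEm)
  have := le_antisymm (ht_extCluster_le_of_sswilf h.symm hlen.symm (hv.1 ▸ hEm))
    (ht_extCluster_le_of_sswilf h hlen (hu.1 ▸ hEm))
  omega

theorem exists_vadd_posSet_eq_of_sswilf (hu : IsPerm n u) (hv : IsPerm n v) (h : SSWilf u v) :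
    ∀ i ∈ Icc 2 (n + 1), ∃ c : ℤ, posSet v i = c +ᵥ posSet u i :=
  exists_vadd_eq_of_sum_card_translatesInto_eq _ _ _
    (fun i hi => by
      have := (mem_Icc.1 hi).1
      rw [card_posSet hu (by omega), card_posSet hv (by omega)])
    (fun i hi j hj hij => by
      have := (mem_Icc.1 hi).1
      have := mem_Icc.1 hj
      rw [card_posSet hu (by omega), card_posSet hu (by omega)]
      omega)
    (fun _ _ => sum_card_translatesInto_eq _ _ _
      (sum_card_sub_eq_of_sum_card_add_eq _ _ _ (sum_card_add_eq_of_sswilf hu hv h)) _)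

theorem ht_extCluster_eq_of_exists_vadd (hu : IsPerm n u) (hv : IsPerm n v)
    (htr : ∀ i ∈ Icc 2 (n + 1), ∃ c : ℤ, posSet v i = c +ᵥ posSet u i) {m : ℕ} {E : Finset ℕ}
    (hE : E ⊆ Icc 1 (m + 1 - n)) : ht (extCluster u E m) = ht (extCluster v E m) := by
  rw [ht_extCluster (N := n + 1) (by omega) (fun x hx => (hu.le_of_mem hx).trans n.le_succ)
      (hu.1 ▸ hE),
    ht_extCluster (N := n + 1) (by omega) (fun x hx => (hv.le_of_mem hx).trans n.le_succ)
      (hv.1 ▸ hE)]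
  refine congrArg _ (sum_congr rfl fun i hi => ?_)
  obtain ⟨c, hc⟩ := htr i hi
  rw [hc, vadd_add_assoc, card_vadd_finset]

theorem card_filter_emFinset_eq (hlen : u.length = v.length)
    (hht : ∀ m E, E ⊆ Icc 1 (m + 1 - u.length) → ht (extCluster u E m) = ht (extCluster v E m))
    (m h : ℕ) (E : Finset ℕ) :
    #{w ∈ wordsOf m h | emFinset u w = E} = #{w ∈ wordsOf m h | emFinset v w = E} := by
  set W := Icc 1 (m + 1 - u.length)
  have hsub (t : Word) (htu : t.length = u.length) (w : Word) (hw : w ∈ wordsOf m h) :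
      emFinset t w ⊆ W := by
    rw [show W = Icc 1 (w.length + 1 - t.length) by rw [htu, (mem_wordsOf.1 hw).1]]
    exact emFinset_subset t w
  have hsup (E : Finset ℕ) (hE : E ⊆ W) :
      #{w ∈ wordsOf m h | E ⊆ emFinset u w} = #{w ∈ wordsOf m h | E ⊆ emFinset v w} := by
    have hdom (t : Word) (htu : t.length = u.length) :
        {w ∈ wordsOf m h | E ⊆ emFinset t w} =
          {w ∈ wordsOf m h | List.Forall₂ (· ≤ ·) (extCluster t E m) w} :=
      filter_congr fun w hw => by
        obtain ⟨rfl, -⟩ := mem_wordsOf.1 hw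
        exact (forall₂_extCluster_iff (htu ▸ hE)).symm
    rw [hdom u rfl, hdom v hlen.symm]
    exact card_filter_forall₂_eq (by simp [extCluster]) (hht m E hE) m h
  -- Möbius inversion in the complements `W \ emFinset · w`.
  have hcompl := Finset.eq_of_sum_powerset_eq
    (f := fun D => #{w ∈ wordsOf m h | W \ emFinset u w = D})
    (g := fun D => #{w ∈ wordsOf m h | W \ emFinset v w = D}) (fun C => by
      have hcomm (A : Finset ℕ) : W \ A ⊆ C ↔ W \ C ⊆ A := sdiff_le_comm
      simp only [sum_powerset_card_filter_eq, hcomm]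
      exact hsup _ sdiff_subset)
  by_cases hE : E ⊆ W
  · have hfilter (t : Word) (htu : t.length = u.length) :
        {w ∈ wordsOf m h | emFinset t w = E} = {w ∈ wordsOf m h | W \ emFinset t w = W \ E} :=
      filter_congr fun w hw => ⟨fun hwE => hwE ▸ rfl, fun hwE => by
        rw [← Finset.sdiff_sdiff_eq_self (hsub t htu w hw), hwE, Finset.sdiff_sdiff_eq_self hE]⟩
    rw [hfilter u rfl, hfilter v hlen.symm]
    exact hcompl (W \ E)
  · have hempty (t : Word) (htu : t.length = u.length) : {w ∈ wordsOf m h | emFinset t w = E} = ∅ :=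
      filter_false_of_mem fun w hw hwE => hE (hwE ▸ hsub t htu w hw)
    rw [hempty u rfl, hempty v hlen.symm]

theorem sswilf_of_card_filter_emFinset_eq
    (h : ∀ m h E, #{w ∈ wordsOf m h | emFinset u w = E} = #{w ∈ wordsOf m h | emFinset v w = E}) :
    SSWilf u v := by
  have hfiber (t : Word) (w : Word) (c : ℕ × ℕ × Finset ℕ) :
      (w.length, ht w, emFinset t w) = c ↔ w ∈ {w ∈ wordsOf c.1 c.2.1 | emFinset t w = c.2.2} := by
    simp [mem_wordsOf, Prod.ext_iff, and_assoc]
  obtain ⟨e, he⟩ := exists_equiv_of_card_fiber_eq _ _ (hfiber u) (hfiber v) fun c => h _ _ _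
  simp only [Prod.mk.injEq] at he
  exact ⟨e, e.bijective, fun w => ⟨(he w).1, (he w).2.1⟩, fun w => by
    rw [← coe_emFinset, ← coe_emFinset, (he w).2.2]⟩

theorem length_posList_eq (hu : IsPerm n u) (hv : IsPerm n v) (i : ℕ) :
    (posList u i).length = (posList v i).length := by
  rw [length_posList, length_posList, hu.perm.countP_eq, hv.perm.countP_eq]

theorem sswilf_iff_exists_vadd (hu : IsPerm n u) (hv : IsPerm n v) :
    SSWilf u v ↔ ∀ i ∈ Icc 2 (n + 1), ∃ c : ℤ, posSet v i = c +ᵥ posSet u i :=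
  ⟨exists_vadd_posSet_eq_of_sswilf hu hv, fun htr => sswilf_of_card_filter_emFinset_eq
    (card_filter_emFinset_eq (hu.1.trans hv.1.symm) fun _ _ hE =>
      ht_extCluster_eq_of_exists_vadd hu hv htr (hu.1 ▸ hE))⟩

/-- For `i ≥ n` the position sets have at most one element, so only `i ≤ n - 1` matters. -/
theorem forall_exists_vadd_iff_delta_eq (hu : IsPerm n u) (hv : IsPerm n v) :
    (∀ i ∈ Icc 2 (n + 1), ∃ c : ℤ, posSet v i = c +ᵥ posSet u i) ↔
      ∀ i, 2 ≤ i → i ≤ n - 1 → Delta u i = Delta v i := by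
  refine ⟨fun h i hi hin => (delta_eq_iff_exists_vadd (length_posList_eq hu hv i)).2
    (h i (mem_Icc.2 ⟨hi, by omega⟩)), fun h i hi => ?_⟩
  obtain ⟨hi, hin⟩ := mem_Icc.1 hi
  by_cases hin' : i ≤ n - 1
  · exact (delta_eq_iff_exists_vadd (length_posList_eq hu hv i)).1 (h i hi hin')
  · exact exists_vadd_eq_of_card_le_one
      (by rw [card_posSet hu (by omega), card_posSet hv (by omega)])
      (by rw [card_posSet hu (by omega)]; omega)

end Equivalence

/-- main theorem: `u ∼ₛₛ v` iff `Δᵢ(u⁻¹) = Δᵢ(v⁻¹)` for all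
`i ∈ [2, n-1]`. -/
theorem sswilf_iff_delta_eq (n : ℕ) (u v : Word)
    (hu : IsPerm n u) (hv : IsPerm n v) :
    SSWilf u v ↔ ∀ i, 2 ≤ i → i ≤ n - 1 → Delta u i = Delta v i :=
  (sswilf_iff_exists_vadd hu hv).trans (forall_exists_vadd_iff_delta_eq hu hv)
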